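/- arXiv:2412.00674 — 6 statements merged into one kernel-verified Lean document; each statement's English description precedes it below -/
import Mathlib

section
/- For every odd positive integer n and every real t, the integral from -pi to pi of cos(xi/2)^n * e^{t*xi} d xi equals 2^{n+1} * cosh(pi*t) / ( C(n,(n-1)/2) * ((n+1)/2) * product over j = 0,...,(n-1)/2 of (1 + t^2/(j+1/2)^2) ), which in turn equals ( 2^{n+1} / ( C(n,(n-1)/2) * ((n+1)/2) ) ) * product over integers j >= (n+1)/2 of (1 + t^2/(j+1/2)^2). -/
/-!
Write `I n t = ∫_{-π}^{π} cos(ξ/2)^n e^{tξ} dξ`. Integrating the derivative of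
`2((n+2) cos(ξ/2)^(n+1) sin(ξ/2) + 2t cos(ξ/2)^(n+2)) e^{tξ}`, which vanishes at `±π`, gives
`((n+2)² + 4t²) I (n+2) t = (n+2)(n+1) I n t`. From `I 1 t = 4 cosh(πt)/(4t²+1)` this telescopes
to the closed form for odd `n`: the new factor `1 + t²/(m+3/2)²` is `((2m+3)² + 4t²)/(2m+3)²`.
The tail product then comes from Euler's product `cosh(πt) = ∏ (1 + t²/(j+1/2)²)`, which is
`sinh(2πt) / (2 sinh(πt))` written with the sine product, split into even and odd factors.
-/

open Filter Finset Topology Real intervalIntegral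

lemma hasProd_of_tendsto_prod_range_of_one_le {f : ℕ → ℝ} {L : ℝ} (hf : ∀ i, 1 ≤ f i)
    (h : Tendsto (fun n => ∏ i ∈ range n, f i) atTop (𝓝 L)) : HasProd f L := by
  have hL : 0 < L := one_pos.trans_le <| ge_of_tendsto' h fun n => one_le_prod fun i _ => hf i
  have hlog : HasSum (fun i => log (f i)) (log L) := by
    refine (hasSum_iff_tendsto_nat_of_nonneg (fun i => log_nonneg (hf i)) _).2 ?_
    simpa [Function.comp_def, ← log_prod fun i _ => (one_pos.trans_le (hf i)).ne']
      using (continuousAt_log hL.ne').tendsto.comp h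
  simpa [Function.comp_def, exp_log hL, exp_log (one_pos.trans_le (hf _))] using hlog.rexp

lemma hasProd_nat_add_of_one_le {f : ℕ → ℝ} {L : ℝ} (hf : ∀ i, 1 ≤ f i)
    (h : Tendsto (fun n => ∏ i ∈ range n, f i) atTop (𝓝 L)) (k : ℕ) :
    HasProd (fun j => f (k + j)) (L / ∏ i ∈ range k, f i) := by
  have hk : ∏ i ∈ range k, f i ≠ 0 := (one_pos.trans_le (one_le_prod fun i _ => hf i)).ne'
  refine hasProd_of_tendsto_prod_range_of_one_le (fun j => hf _) ?_
  refine ((h.comp (tendsto_add_atTop_nat k)).div_const _).congr fun n => ?_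
  simp [add_comm n k, prod_range_add, hk]

lemma prod_range_two_mul {M : Type*} [CommMonoid M] (g : ℕ → M) (n : ℕ) :
    ∏ k ∈ range (2 * n), g k = (∏ j ∈ range n, g (2 * j)) * ∏ j ∈ range n, g (2 * j + 1) := by
  induction n with
  | zero => simp
  | succ n ih =>
    rw [mul_add_one, prod_range_succ, prod_range_succ, prod_range_succ, prod_range_succ, ih]
    ac_rfl

theorem Complex.tendsto_euler_cos_prod {z : ℂ} (hz : Complex.sin (π * z) ≠ 0) :
    Tendsto (fun n : ℕ => ∏ j ∈ range n, (1 - z ^ 2 / ((j : ℂ) + 1 / 2) ^ 2)) atTop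
      (𝓝 (Complex.cos (π * z))) := by
  set C : ℕ → ℂ := fun n => ∏ j ∈ range n, (1 - z ^ 2 / ((j : ℂ) + 1 / 2) ^ 2)
  set S : ℂ → ℕ → ℂ := fun w n => π * w * ∏ j ∈ range n, (1 - w ^ 2 / ((j : ℂ) + 1) ^ 2)
  -- the even factors of the sine product at `2z` form `C`, the odd ones the sine product at `z`
  have hsplit : ∀ n, S (2 * z) (2 * n) = 2 * C n * S z n := by
    intro n
    have heven (j : ℕ) : ((2 * j : ℕ) : ℂ) + 1 = 2 * ((j : ℂ) + 1 / 2) := by push_cast; ring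
    have hodd (j : ℕ) : ((2 * j + 1 : ℕ) : ℂ) + 1 = 2 * ((j : ℂ) + 1) := by push_cast; ring
    simp only [S, C, prod_range_two_mul, heven, hodd, mul_pow,
      mul_div_mul_left _ _ (pow_ne_zero 2 (two_ne_zero' ℂ))]
    ring
  have hS2 : Tendsto (fun n => S (2 * z) (2 * n)) atTop (𝓝 (Complex.sin (π * (2 * z)))) :=
    (Complex.tendsto_euler_sin_prod (2 * z)).comp (tendsto_id.const_mul_atTop' two_pos)
  have hS : Tendsto (S z) atTop (𝓝 (Complex.sin (π * z))) := Complex.tendsto_euler_sin_prod z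
  have hcos : Complex.sin (π * (2 * z)) / (2 * Complex.sin (π * z)) = Complex.cos (π * z) := by
    rw [show π * (2 * z) = 2 * (π * z) by ring, Complex.sin_two_mul]
    field_simp
  have hlim := hS2.div (hS.const_mul 2) (mul_ne_zero two_ne_zero hz)
  rw [hcos] at hlim
  refine hlim.congr' ((hS.eventually_ne hz).mono fun n hn => ?_)
  change S (2 * z) (2 * n) / (2 * S z n) = C n
  rw [hsplit]
  field_simp

theorem Real.tendsto_euler_cosh_prod (t : ℝ) :
    Tendsto (fun n : ℕ => ∏ j ∈ range n, (1 + t ^ 2 / ((j : ℝ) + 1 / 2) ^ 2)) atTop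
      (𝓝 (cosh (π * t))) := by
  rcases eq_or_ne t 0 with rfl | ht
  · simp
  have hsin : Complex.sin (π * (t * Complex.I)) ≠ 0 := by
    rw [← mul_assoc, Complex.sin_mul_I, ← Complex.ofReal_mul, ← Complex.ofReal_sinh]
    exact mul_ne_zero (by exact_mod_cast sinh_ne_zero.2 (mul_ne_zero pi_ne_zero ht))
      Complex.I_ne_zero
  rw [← tendsto_ofReal_iff]
  convert Complex.tendsto_euler_cos_prod hsin using 2 with n
  · push_cast
    refine prod_congr rfl fun j _ => ?_
    rw [mul_pow, Complex.I_sq]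
    ring
  · rw [← mul_assoc, Complex.cos_mul_I, Complex.ofReal_cosh, Complex.ofReal_mul]

theorem Nat.add_two_mul_choose_two_mul_add_three (m : ℕ) :
    (m + 2) * (2 * m + 3).choose (m + 1) = 2 * (2 * m + 3) * (2 * m + 1).choose m := by
  have hsucc := Nat.choose_mul_succ_eq (2 * m + 2) (m + 1)
  have hmid : (2 * m + 2).choose (m + 1) = 2 * (2 * m + 1).choose m := by
    rw [Nat.choose_succ_succ, Nat.choose_symm_half]; ring
  rw [show 2 * m + 2 + 1 - (m + 1) = m + 2 by omega, hmid] at hsucc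
  linarith

noncomputable def cosPowExpIntegral (n : ℕ) (t : ℝ) : ℝ :=
  ∫ ξ in (-π)..π, cos (ξ / 2) ^ n * exp (t * ξ)

lemma hasDerivAt_cos_half (ξ : ℝ) : HasDerivAt (fun x => cos (x / 2)) (-sin (ξ / 2) / 2) ξ :=
  ((hasDerivAt_id' ξ).div_const 2).cos.congr_deriv (by ring)

lemma hasDerivAt_sin_half (ξ : ℝ) : HasDerivAt (fun x => sin (x / 2)) (cos (ξ / 2) / 2) ξ :=
  ((hasDerivAt_id' ξ).div_const 2).sin.congr_deriv (by ring)

lemma hasDerivAt_exp_mul (t ξ : ℝ) : HasDerivAt (fun x => exp (t * x)) (t * exp (t * ξ)) ξ := by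
  simpa [mul_comm] using ((hasDerivAt_id ξ).const_mul t).exp

lemma intervalIntegrable_cos_half_pow_mul_exp (n : ℕ) (t a b : ℝ) :
    IntervalIntegrable (fun ξ => cos (ξ / 2) ^ n * exp (t * ξ)) MeasureTheory.volume a b :=
  (by fun_prop : Continuous _).intervalIntegrable a b

theorem cosPowExpIntegral_one (t : ℝ) :
    cosPowExpIntegral 1 t = 4 * cosh (π * t) / (4 * t ^ 2 + 1) := by
  have hD : 4 * t ^ 2 + 1 ≠ 0 := by positivity
  have hF : ∀ ξ, HasDerivAt
      (fun x => 2 * exp (t * x) * (2 * t * cos (x / 2) + sin (x / 2)) / (4 * t ^ 2 + 1))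
      (cos (ξ / 2) ^ 1 * exp (t * ξ)) ξ := by
    intro ξ
    refine ((((hasDerivAt_exp_mul t ξ).const_mul 2).fun_mul
      (((hasDerivAt_cos_half ξ).const_mul (2 * t)).fun_add (hasDerivAt_sin_half ξ))).div_const
        _).congr_deriv ?_
    field_simp
    ring
  rw [cosPowExpIntegral, integral_eq_sub_of_hasDerivAt (fun ξ _ => hF ξ)
    (intervalIntegrable_cos_half_pow_mul_exp 1 t _ _)]
  simp only [neg_div, cos_neg, sin_neg, cos_pi_div_two, sin_pi_div_two, cosh_eq]
  field_simp
  ring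

theorem cosPowExpIntegral_add_two (n : ℕ) (t : ℝ) :
    ((n + 2 : ℝ) ^ 2 + 4 * t ^ 2) * cosPowExpIntegral (n + 2) t
      = (n + 2) * (n + 1) * cosPowExpIntegral n t := by
  have hF : ∀ ξ, HasDerivAt
      (fun x => 2 * ((n + 2) * cos (x / 2) ^ (n + 1) * sin (x / 2) + 2 * t * cos (x / 2) ^ (n + 2))
        * exp (t * x))
      (((n + 2 : ℝ) ^ 2 + 4 * t ^ 2) * (cos (ξ / 2) ^ (n + 2) * exp (t * ξ))
        - (n + 2) * (n + 1) * (cos (ξ / 2) ^ n * exp (t * ξ))) ξ := by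
    intro ξ
    have hc := hasDerivAt_cos_half ξ
    refine (((((hc.fun_pow (n + 1)).const_mul ((n : ℝ) + 2)).fun_mul
      (hasDerivAt_sin_half ξ)).fun_add ((hc.fun_pow (n + 2)).const_mul (2 * t))).const_mul
        2).fun_mul (hasDerivAt_exp_mul t ξ) |>.congr_deriv ?_
    simp only [Nat.add_sub_cancel, show n + 2 - 1 = n + 1 from rfl, Nat.cast_add, Nat.cast_ofNat,
      Nat.cast_one]
    linear_combination
      (-(n + 2) * (n + 1) * cos (ξ / 2) ^ n * exp (t * ξ)) * sin_sq_add_cos_sq (ξ / 2)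
  have hi (k : ℕ) := intervalIntegrable_cos_half_pow_mul_exp k t (-π) π
  have key := integral_eq_sub_of_hasDerivAt (fun ξ _ => hF ξ)
    (((hi _).const_mul _).sub ((hi _).const_mul _))
  rw [integral_sub ((hi _).const_mul _) ((hi _).const_mul _), integral_const_mul,
    integral_const_mul] at key
  simp only [neg_div, cos_neg, cos_pi_div_two, zero_pow (Nat.succ_ne_zero _), mul_zero, zero_mul,
    add_zero, sub_self] at key
  rw [cosPowExpIntegral, cosPowExpIntegral]
  linarith

theorem cosPowExpIntegral_two_mul_add_one (m : ℕ) (t : ℝ) :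
    cosPowExpIntegral (2 * m + 1) t = 2 ^ (2 * m + 2) * cosh (π * t) /
      ((2 * m + 1).choose m * ((m : ℝ) + 1) *
        ∏ j ∈ range (m + 1), (1 + t ^ 2 / ((j : ℝ) + 1 / 2) ^ 2)) := by
  induction m with
  | zero =>
    rw [cosPowExpIntegral_one, prod_range_one]
    simp only [mul_zero, zero_add, Nat.choose_zero_right, Nat.cast_one, Nat.cast_zero]
    field_simp
    ring
  | succ m ih =>
    have hC : ((2 * m + 3).choose (m + 1) : ℝ)
        = 2 * (2 * m + 3) * (2 * m + 1).choose m / (m + 2) := by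
      rw [eq_div_iff (by positivity)]
      exact_mod_cast (mul_comm _ _).trans (Nat.add_two_mul_choose_two_mul_add_three m)
    have hC0 : (0 : ℝ) < (2 * m + 1).choose m := by exact_mod_cast Nat.choose_pos (by omega)
    have hD : ((2 * m + 1 : ℕ) + 2 : ℝ) ^ 2 + 4 * t ^ 2 ≠ 0 := by positivity
    apply mul_left_cancel₀ hD
    rw [show 2 * (m + 1) + 1 = 2 * m + 1 + 2 from rfl, cosPowExpIntegral_add_two, ih,
      prod_range_succ _ (m + 1), show 2 * m + 1 + 2 = 2 * m + 3 from rfl, hC]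
    have hQ : 0 < ∏ j ∈ range (m + 1), (1 + t ^ 2 / ((j : ℝ) + 1 / 2) ^ 2) :=
      prod_pos fun j _ => by positivity
    generalize ∏ j ∈ range (m + 1), (1 + t ^ 2 / ((j : ℝ) + 1 / 2) ^ 2) = Q at hQ ⊢
    push_cast
    field_simp
    ring

theorem mgf_binomial_fourier_general (n : ℕ) (hodd : Odd n) (t : ℝ) :
    (∫ ξ in (-Real.pi)..Real.pi, Real.cos (ξ/2)^n * Real.exp (t * ξ))
      = 2^(n+1) * Real.cosh (Real.pi * t) /
          ((n.choose ((n-1)/2) : ℝ) * (((n:ℝ)+1)/2) *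
            ∏ j ∈ Finset.range ((n-1)/2 + 1), (1 + t^2 / ((j:ℝ) + 1/2)^2)) ∧
    (∫ ξ in (-Real.pi)..Real.pi, Real.cos (ξ/2)^n * Real.exp (t * ξ))
      = (2^(n+1) / ((n.choose ((n-1)/2) : ℝ) * (((n:ℝ)+1)/2))) *
          ∏' j : ℕ, (1 + t^2 / ((((n+1)/2 + j : ℕ) : ℝ) + 1/2)^2) := by
  obtain ⟨m, rfl⟩ := hodd
  change cosPowExpIntegral (2 * m + 1) t = _ ∧ cosPowExpIntegral (2 * m + 1) t = _
  have hcast : (((2 * m + 1 : ℕ) : ℝ) + 1) / 2 = m + 1 := by push_cast; ring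
  rw [show (2 * m + 1 - 1) / 2 = m by omega, show (2 * m + 1 + 1) / 2 = m + 1 by omega, hcast,
    cosPowExpIntegral_two_mul_add_one]
  refine ⟨rfl, ?_⟩
  have htail := hasProd_nat_add_of_one_le (fun j => le_add_of_nonneg_right (by positivity))
    (tendsto_euler_cosh_prod t) (m + 1)
  rw [htail.tprod_eq, div_mul_div_comm]

/-- For every odd positive integer `n` and real `t`, the moment generating function
`∫_{-π}^{π} cos(ξ/2)^n e^{tξ} dξ` equals
`2^(n+1) cosh(πt) / (C(n,(n-1)/2) ((n+1)/2) ∏_{j=0}^{(n-1)/2} (1 + t²/(j+1/2)²))`,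
which in turn equals
`(2^(n+1)/(C(n,(n-1)/2) ((n+1)/2))) ∏_{j ≥ (n+1)/2} (1 + t²/(j+1/2)²)`. -/
theorem mgf_binomial_fourier (n : ℕ) (hodd : Odd n) (hn : 0 < n) (t : ℝ) :
    (∫ ξ in (-Real.pi)..Real.pi, Real.cos (ξ/2)^n * Real.exp (t * ξ))
      = 2^(n+1) * Real.cosh (Real.pi * t) /
          ((n.choose ((n-1)/2) : ℝ) * (((n:ℝ)+1)/2) *
            ∏ j ∈ Finset.range ((n-1)/2 + 1), (1 + t^2 / ((j:ℝ) + 1/2)^2)) ∧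
    (∫ ξ in (-Real.pi)..Real.pi, Real.cos (ξ/2)^n * Real.exp (t * ξ))
      = (2^(n+1) / ((n.choose ((n-1)/2) : ℝ) * (((n:ℝ)+1)/2))) *
          ∏' j : ℕ, (1 + t^2 / ((((n+1)/2 + j : ℕ) : ℝ) + 1/2)^2) :=
  mgf_binomial_fourier_general n hodd t
end

section
/- For every odd positive integer n and every real t, the integral from -pi to pi of cos(xi/2)^n * e^{t*xi} d xi is at most e^{2*t^2/n} * sqrt(8*pi/n). -/
/-!
On `[-π, π]` we have `cos (ξ / 2) ^ n ≤ exp (-n ξ² / 8)`, which comes from `cos x ≤ (1 - x² / 4)²`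
(double-angle formula and `sin y ≥ y - y³ / 6`) together with `1 - u ≤ exp (-u)`. Hence the integral
is at most the integral over all of `ℝ` of `exp (-(n / 8) ξ² + t ξ)`, which is computed by completing
the square.
-/

open Real MeasureTheory

lemma cos_le_one_sub_sq_div_four_sq {x : ℝ} (hx : |x| ≤ 2) : cos x ≤ (1 - x ^ 2 / 4) ^ 2 := by
  obtain ⟨y, rfl⟩ : ∃ y, x = 2 * y := ⟨x / 2, by ring⟩
  wlog hy : 0 ≤ y generalizing y
  · simpa using this (-y) (by simpa [abs_mul] using hx) (by linarith)
  have hy₁ : y ≤ 1 := by rw [abs_of_nonneg (by positivity)] at hx; linarith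
  have hsin : y - y ^ 3 / 6 ≤ sin y := sin_ge_sub_cube hy
  have hsin_nonneg : 0 ≤ y - y ^ 3 / 6 := by nlinarith [mul_le_one₀ hy₁ hy hy₁]
  rw [cos_two_mul_eq_one_sub]
  nlinarith [pow_le_pow_left₀ hsin_nonneg hsin 2, pow_nonneg hy 6]

lemma cos_le_exp_neg_sq_div_two {x : ℝ} (hx : |x| ≤ 2) : cos x ≤ exp (-(x ^ 2 / 2)) := by
  have hsq : x ^ 2 ≤ 4 := by nlinarith [sq_abs x, abs_nonneg x]
  calc cos x ≤ (1 - x ^ 2 / 4) ^ 2 := cos_le_one_sub_sq_div_four_sq hx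
    _ ≤ exp (-(x ^ 2 / 4)) ^ 2 :=
        pow_le_pow_left₀ (by linarith) (by linarith [add_one_le_exp (-(x ^ 2 / 4))]) 2
    _ = exp (-(x ^ 2 / 2)) := by rw [← exp_nat_mul]; ring_nf

lemma cos_half_pow_le_exp_neg_mul_sq (n : ℕ) {ξ : ℝ} (hξ : |ξ| ≤ π) :
    cos (ξ / 2) ^ n ≤ exp (-(n / 8) * ξ ^ 2) := by
  have hhalf : |ξ / 2| ≤ π / 2 := by rw [abs_div, abs_two]; linarith
  have hcos_nonneg : 0 ≤ cos (ξ / 2) := cos_nonneg_of_mem_Icc (abs_le.mp hhalf)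
  calc cos (ξ / 2) ^ n ≤ exp (-((ξ / 2) ^ 2 / 2)) ^ n :=
        pow_le_pow_left₀ hcos_nonneg (cos_le_exp_neg_sq_div_two (by linarith [pi_lt_d2])) n
    _ = exp (-(n / 8) * ξ ^ 2) := by rw [← exp_nat_mul]; ring_nf

section GaussianWithLinearTerm

variable {a : ℝ} (t : ℝ)

lemma exp_neg_mul_sq_add_mul_eq (ha : a ≠ 0) (x : ℝ) :
    exp (-a * x ^ 2 + t * x) = exp (t ^ 2 / (4 * a)) * exp (-a * (x - t / (2 * a)) ^ 2) := by
  rw [← exp_add]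
  congr 1
  field_simp
  ring

lemma integrable_exp_neg_mul_sq_add_mul (ha : 0 < a) :
    Integrable (fun x : ℝ ↦ exp (-a * x ^ 2 + t * x)) := by
  simp_rw [exp_neg_mul_sq_add_mul_eq t ha.ne']
  exact ((integrable_exp_neg_mul_sq ha).comp_sub_right _).const_mul _

lemma integral_exp_neg_mul_sq_add_mul (ha : 0 < a) :
    ∫ x : ℝ, exp (-a * x ^ 2 + t * x) = exp (t ^ 2 / (4 * a)) * sqrt (π / a) := by
  simp_rw [exp_neg_mul_sq_add_mul_eq t ha.ne']
  rw [integral_const_mul, integral_sub_right_eq_self (fun x ↦ exp (-a * x ^ 2)),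
    integral_gaussian]

end GaussianWithLinearTerm

theorem mgf_binomial_fourier_bound_general (n : ℕ) (hn : 0 < n) (t : ℝ) :
    (∫ ξ in (-Real.pi)..Real.pi, Real.cos (ξ/2)^n * Real.exp (t * ξ))
      ≤ Real.exp (2 * t^2 / n) * Real.sqrt (8 * Real.pi / n) := by
  have ha : (0 : ℝ) < n / 8 := by positivity
  have hle : -π ≤ π := by linarith [pi_pos]
  calc (∫ ξ in (-π)..π, cos (ξ / 2) ^ n * exp (t * ξ))
      ≤ ∫ ξ in (-π)..π, exp (-(n / 8) * ξ ^ 2 + t * ξ) := by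
        refine intervalIntegral.integral_mono_on hle
          (Continuous.intervalIntegrable (by fun_prop) _ _)
          (Continuous.intervalIntegrable (by fun_prop) _ _) fun ξ hξ ↦ ?_
        rw [exp_add]
        exact mul_le_mul_of_nonneg_right
          (cos_half_pow_le_exp_neg_mul_sq n (abs_le.mpr hξ)) (exp_nonneg _)
    _ ≤ ∫ ξ, exp (-(n / 8) * ξ ^ 2 + t * ξ) := by
        rw [intervalIntegral.integral_of_le hle]
        exact setIntegral_le_integral (integrable_exp_neg_mul_sq_add_mul t ha)
          (.of_forall fun _ ↦ (exp_pos _).le)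
    _ = exp (2 * t ^ 2 / n) * sqrt (8 * π / n) := by
        rw [integral_exp_neg_mul_sq_add_mul t ha]
        congr 2
        · field_simp
          ring
        · field_simp

/-- For every odd positive integer `n` and real `t`,
`∫_{-π}^{π} cos(ξ/2)^n e^{tξ} dξ ≤ e^{2t²/n} √(8π/n)`. -/
theorem mgf_binomial_fourier_bound (n : ℕ) (hodd : Odd n) (hn : 0 < n) (t : ℝ) :
    (∫ ξ in (-Real.pi)..Real.pi, Real.cos (ξ/2)^n * Real.exp (t * ξ))
      ≤ Real.exp (2 * t^2 / n) * Real.sqrt (8 * Real.pi / n) :=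
  mgf_binomial_fourier_bound_general n hn t
end

section
/- For every odd positive integer n and every real t, the product over integers j >= (n+1)/2 of (1 + t^2/(j+1/2)^2) is at most e^{2*t^2/n}. -/
/-- For every odd positive integer `n` and real `t`, the product over integers
`j ≥ (n+1)/2` of `(1 + t²/(j+1/2)²)` is at most `e^{2t²/n}`. -/
theorem tail_product_bound (n : ℕ) (hodd : Odd n) (hn : 0 < n) (t : ℝ) :
    ∏' j : ℕ, (1 + t^2 / ((((n+1)/2 + j : ℕ) : ℝ) + 1/2)^2) ≤ Real.exp (2 * t^2 / n) := by
  obtain ⟨k, hk⟩ := hodd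
  have hmn : (n+1)/2 = k+1 := by omega
  have hnR : (n : ℝ) = 2*k+1 := by rw [hk]; push_cast; ring
  have hnpos : (0:ℝ) < n := by positivity
  set a : ℕ → ℝ := fun j => t^2 / ((((n+1)/2 + j : ℕ) : ℝ) + 1/2)^2 with ha
  have hcast : ∀ j : ℕ, (((n+1)/2 + j : ℕ) : ℝ) = (k:ℝ) + 1 + j := by
    intro j; rw [hmn]; push_cast; ring
  have hexp1 : (1:ℝ) ≤ Real.exp (2 * t^2 / n) :=
    Real.one_le_exp (by positivity)
  -- partial sum bound
  have hsum : ∀ N : ℕ, ∑ j ∈ Finset.range N, a j ≤ 2 * t^2 / n := by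
    intro N
    set F : ℕ → ℝ := fun j => t^2 / ((k:ℝ) + j + 1/2) with hF
    have hterm : ∀ j : ℕ, a j ≤ F j - F (j+1) := by
      intro j
      have hx : (0:ℝ) < (k:ℝ) + j + 1/2 := by positivity
      simp only [ha, hF, hcast j]
      push_cast
      rw [div_sub_div _ _ (ne_of_gt hx) (by positivity)]
      rw [div_le_div_iff₀ (by positivity) (by positivity)]
      nlinarith [sq_nonneg t, sq_nonneg ((k:ℝ)+j), hx]
    calc ∑ j ∈ Finset.range N, a j ≤ ∑ j ∈ Finset.range N, (F j - F (j+1)) :=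
          Finset.sum_le_sum fun j _ => hterm j
      _ = F 0 - F N := Finset.sum_range_sub' F N
      _ ≤ F 0 := by
          have : 0 ≤ F N := by simp only [hF]; positivity
          linarith
      _ = 2 * t^2 / n := by
          simp only [hF, hnR]
          push_cast
          rw [div_eq_div_iff (by positivity) (by positivity)]
          ring
  by_cases hmul : Multipliable (fun j => 1 + a j)
  · refine le_of_tendsto' hmul.hasProd.tendsto_prod_nat ?_
    intro N
    calc ∏ j ∈ Finset.range N, (1 + a j)
        ≤ ∏ j ∈ Finset.range N, Real.exp (a j) :=
          Finset.prod_le_prod (fun j _ => by positivity)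
            (fun j _ => by rw [add_comm]; exact Real.add_one_le_exp (a j))
      _ = Real.exp (∑ j ∈ Finset.range N, a j) := (Real.exp_sum _ _).symm
      _ ≤ Real.exp (2 * t^2 / n) := Real.exp_le_exp.2 (hsum N)
  · rw [tprod_eq_one_of_not_multipliable hmul]
    exact hexp1
end

section
/- For every odd positive integer n, 2^{n+1} / ( C(n,(n-1)/2) * ((n+1)/2) ) <= sqrt(8*pi/n). -/
open Finset Real

lemma prod_odd_div (m : ℕ) :
    (∏ i ∈ range m, (2 * (i : ℝ) + 1) / (2 * i + 2)) = (m.centralBinom : ℝ) / 4 ^ m := by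
  induction m with
  | zero => simp [Nat.centralBinom]
  | succ k ih =>
    rw [prod_range_succ, ih]
    have h := Nat.succ_mul_centralBinom_succ k
    have h' : ((k+1 : ℕ) : ℝ) * (Nat.centralBinom (k+1) : ℝ)
        = 2 * (2 * k + 1) * (Nat.centralBinom k : ℝ) := by exact_mod_cast congrArg Nat.cast h
    push_cast at h'
    have hk1 : ((k:ℝ) + 1) ≠ 0 := by positivity
    have h4 : (4:ℝ) ^ k ≠ 0 := by positivity
    field_simp
    push_cast
    linear_combination (-2 * (4:ℝ) ^ k) * h'

lemma prod_even_div (m : ℕ) :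
    (∏ i ∈ range m, (2 * (i : ℝ) + 2) / (2 * i + 3)) = 4 ^ m / ((2 * m + 1) * m.centralBinom) := by
  induction m with
  | zero => simp [Nat.centralBinom]
  | succ k ih =>
    rw [prod_range_succ, ih]
    have h := Nat.succ_mul_centralBinom_succ k
    have h' : ((k+1 : ℕ) : ℝ) * (Nat.centralBinom (k+1) : ℝ)
        = 2 * (2 * k + 1) * (Nat.centralBinom k : ℝ) := by exact_mod_cast congrArg Nat.cast h
    have hcb : (0:ℝ) < (Nat.centralBinom k : ℝ) := by
      exact_mod_cast k.centralBinom_pos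
    have hcb1 : (0:ℝ) < (Nat.centralBinom (k+1) : ℝ) := by
      exact_mod_cast (k+1).centralBinom_pos
    push_cast at h'
    have h1 : (2 * (k:ℝ) + 1) ≠ 0 := by positivity
    have h2 : (2 * (k:ℝ) + 3) ≠ 0 := by positivity
    have hcb' : (Nat.centralBinom k : ℝ) ≠ 0 := ne_of_gt hcb
    have hcb1' : (Nat.centralBinom (k+1) : ℝ) ≠ 0 := ne_of_gt hcb1
    field_simp
    push_cast
    linear_combination (2 * (2 * (k:ℝ) + 3) * (4:ℝ) ^ k) * h'

lemma key_ineq (m : ℕ) :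
    2 * ((4:ℝ) ^ m) ^ 2 ≤ Real.pi * (2 * m + 1) * (m.centralBinom : ℝ) ^ 2 := by
  have h := integral_sin_pow_succ_le (n := 2 * m)
  rw [integral_sin_pow_odd, integral_sin_pow_even, prod_odd_div, prod_even_div] at h
  have hcb : (0:ℝ) < (Nat.centralBinom m : ℝ) := by exact_mod_cast m.centralBinom_pos
  have h4 : (0:ℝ) < 4 ^ m := by positivity
  have h1 : (0:ℝ) < 2 * (m:ℝ) + 1 := by positivity
  rw [← mul_div_assoc, ← mul_div_assoc, div_le_div_iff₀ (by positivity) (by positivity)] at h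
  nlinarith [h]

/-- For every odd positive integer `n`,
`2^(n+1) / ( C(n,(n-1)/2) * ((n+1)/2) ) ≤ sqrt(8π/n)`. -/
theorem central_binomial_bound (n : ℕ) (hodd : Odd n) (hn : 0 < n) :
    (2:ℝ)^(n+1) / ((n.choose ((n-1)/2) : ℝ) * (((n:ℝ)+1)/2)) ≤ Real.sqrt (8 * Real.pi / n) := by
  obtain ⟨m, rfl⟩ := hodd
  have hdiv : (2 * m + 1 - 1) / 2 = m := by omega
  rw [hdiv]
  -- denominator identity: choose (2m+1) m * (m+1) = (2m+1) * centralBinom m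
  have hden : (2 * m + 1).choose m * (m + 1) = (2 * m + 1) * m.centralBinom := by
    have h1 : (2 * m + 1).choose m = (2 * m + 1).choose (m + 1) := by
      rw [← Nat.choose_symm (by omega)]
      congr 1
      omega
    have h2 := Nat.add_one_mul_choose_eq (2 * m) m
    rw [h1]
    unfold Nat.centralBinom
    omega
  have hcb : (0:ℝ) < (Nat.centralBinom m : ℝ) := by exact_mod_cast m.centralBinom_pos
  have hn1 : (0:ℝ) < 2 * (m:ℝ) + 1 := by positivity
  have hdeneq : ((2 * m + 1).choose m : ℝ) * (((2 * m + 1 : ℕ) : ℝ) + 1) / 2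
      = (2 * (m:ℝ) + 1) * (m.centralBinom : ℝ) := by
    have := congrArg (Nat.cast : ℕ → ℝ) hden
    push_cast at this ⊢
    linarith
  have hLHS : ((2 * m + 1).choose m : ℝ) * ((((2 * m + 1 : ℕ)) : ℝ) + 1) / 2
      = ((2 * m + 1).choose m : ℝ) * (((((2 * m + 1 : ℕ)) : ℝ) + 1) / 2) := by ring
  rw [show ((2 * m + 1).choose m : ℝ) * ((((2 * m + 1 : ℕ) : ℝ)) + 1) / 2
      = (2 * (m:ℝ) + 1) * (m.centralBinom : ℝ) from hdeneq] at hLHS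
  rw [← hLHS]
  have hx : (0:ℝ) ≤ (2:ℝ)^(2*m+1+1) / ((2 * (m:ℝ) + 1) * (m.centralBinom : ℝ)) := by positivity
  have hy : (0:ℝ) ≤ 8 * Real.pi / ((2 * m + 1 : ℕ) : ℝ) := by positivity
  rw [Real.le_sqrt hx]
  swap
  · exact hy
  rw [div_pow, div_le_div_iff₀ (by positivity) (by exact_mod_cast hn1)]
  have hkey := key_ineq m
  have h2pow : (2:ℝ) ^ (2*m+1+1) = 4 * 4 ^ m := by
    have e : 2*m+1+1 = 2*(m+1) := by ring
    rw [e, pow_mul]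
    norm_num [pow_succ, mul_comm]
  rw [h2pow]
  push_cast
  nlinarith [hkey, hcb, pow_pos (show (0:ℝ) < 4 by norm_num) m, hn1]
end

section
/- For every delta in (0, 1/2] and every real xi with 1/3 <= |xi| <= pi, the inequality (1-delta)/|1 - delta*e^{i*xi}| <= 1 - delta/20 holds. -/
/-!
Squaring, the claim becomes `(1 - δ)² ≤ (1 - δ/20)² (1 - 2δ cos ξ + δ²)`. On `1/3 ≤ |ξ| ≤ π` we have
`cos ξ ≤ cos (1/3) < 19/20`, and at `cos ξ = 19/20` the difference of the two sides is
`δ² (77/400 - 419 δ/4000 + δ²/400)`: the linear terms cancel exactly, so `19/20` is the threshold the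
constant `1/20` allows.
-/

open Real

theorem norm_one_sub_ofReal_mul_cexp_I_mul_sq (a x : ℝ) :
    ‖1 - (a : ℂ) * Complex.exp (Complex.I * x)‖ ^ 2 = 1 - 2 * a * cos x + a ^ 2 := by
  rw [Complex.sq_norm, mul_comm Complex.I, Complex.exp_mul_I, ← Complex.ofReal_cos,
    ← Complex.ofReal_sin, Complex.normSq_apply]
  simp only [Complex.sub_re, Complex.sub_im, Complex.mul_re, Complex.mul_im, Complex.add_re,
    Complex.add_im, Complex.ofReal_re, Complex.ofReal_im, Complex.one_re, Complex.one_im,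
    Complex.I_re, Complex.I_im]
  linear_combination a ^ 2 * sin_sq_add_cos_sq x

theorem Real.cos_le_of_one_third_le_abs {x : ℝ} (hl : 1 / 3 ≤ |x|) (hu : |x| ≤ π) :
    cos x ≤ 19 / 20 := by
  have hbound := abs_le.1 (cos_bound (x := 1 / 3) (by norm_num [abs_of_nonneg]))
  calc cos x = cos |x| := (cos_abs x).symm
    _ ≤ cos (1 / 3) := cos_le_cos_of_nonneg_of_le_pi (by norm_num) hu hl
    _ ≤ 19 / 20 := by norm_num [abs_of_nonneg] at hbound; linarith [hbound.2]

theorem one_sub_sq_le_of_cos_le {δ c : ℝ} (h0 : 0 ≤ δ) (h1 : δ ≤ 1) (hc : c ≤ 19 / 20) :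
    (1 - δ) ^ 2 ≤ (1 - δ / 20) ^ 2 * (1 - 2 * δ * c + δ ^ 2) := by
  have hsplit : (1 - δ / 20) ^ 2 * (1 - 2 * δ * c + δ ^ 2) - (1 - δ) ^ 2
      = δ ^ 2 * (77 / 400 - 419 / 4000 * δ + δ ^ 2 / 400)
        + 2 * δ * (1 - δ / 20) ^ 2 * (19 / 20 - c) := by ring
  have hquad : 0 ≤ 77 / 400 - 419 / 4000 * δ + δ ^ 2 / 400 := by nlinarith
  have hcos : 0 ≤ 2 * δ * (1 - δ / 20) ^ 2 * (19 / 20 - c) := by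
    have := sub_nonneg.2 hc
    positivity
  linarith [mul_nonneg (sq_nonneg δ) hquad]

/-- For every `δ ∈ (0, 1/2]` and every real `ξ` with `1/3 ≤ |ξ| ≤ π`,
`(1-δ)/|1 - δ e^{iξ}| ≤ 1 - δ/20`. -/
theorem deletion_fourier_decay (δ : ℝ) (h0 : 0 < δ) (h1 : δ ≤ 1/2)
    (ξ : ℝ) (hl : 1/3 ≤ |ξ|) (hu : |ξ| ≤ Real.pi) :
    (1 - δ) / ‖(1 - (δ : ℂ) * Complex.exp (Complex.I * (ξ : ℂ)))‖ ≤ 1 - δ/20 := by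
  have hsq := one_sub_sq_le_of_cos_le h0.le (by linarith) (cos_le_of_one_third_le_abs hl hu)
  rw [← norm_one_sub_ofReal_mul_cexp_I_mul_sq, ← mul_pow] at hsq
  refine div_le_of_le_mul₀ (norm_nonneg _) (by linarith) ?_
  exact (pow_le_pow_iff_left₀ (by linarith) (mul_nonneg (by linarith) (norm_nonneg _))
    two_ne_zero).1 hsq
end

section
/- Let n and w be positive integers and let sigma, tau : {1,...,w} -> {1,...,n} be strictly increasing maps. Let p_1,...,p_n be independent random variables, each uniform on [0,1], and conditionally on p_1,...,p_n let X_1,...,X_w, Y_1,...,Y_w be mutually independent bits with X_t ~ Bernoulli(p_{sigma(t)}) and Y_t ~ Bernoulli(p_{tau(t)}). Let q be the number of indices t with sigma(t) = tau(t) and let r = w - q. Then for every beta > 0, the probability that | sum over t = 1,...,w of |X_t - Y_t| minus (q/3 + r/2) | >= beta is at most 2*exp(-2*beta^2 / w). -/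
open MeasureTheory

/-- The distribution of `n` independent probabilities, each uniform on `[0,1]`. -/
noncomputable def uniformCube (n : ℕ) : Measure (Fin n → ℝ) :=
  Measure.pi fun _ => volume.restrict (Set.Icc (0:ℝ) 1)

/-!
Only the parities `Z_t = X_t xor Y_t` matter. Given `p` they are independent, with `Z_t = 1` with
probability `u (1 - v) + (1 - u) v`, where `u = p_{σ t}` and `v = p_{τ t}`. Integrate `p` out one
coordinate at a time, always the larger position `max (σ t) (τ t)` of the last index `t`, which by
monotonicity no earlier index uses. A misaligned factor is affine in that fresh coordinate and
averages to `1/2` whatever the other coordinate is; an aligned one averages `2u(1-u)` to `1/3`.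
Hence the `Z_t` stay independent after averaging over `p`, with means `1/3` and `1/2`, so `∑ Z_t`
has mean `q/3 + r/2` and Hoeffding's inequality gives the bound.
-/

open ProbabilityTheory Finset

section ProductMeasure

variable {ι : Type*} [Fintype ι] {α : ι → Type*} [∀ j, MeasurableSpace (α j)]
  (μ : ∀ j, Measure (α j))

theorem measurePreserving_update [DecidableEq ι] [∀ j, SigmaFinite (μ j)] (i : ι)
    [IsProbabilityMeasure (μ i)] :
    MeasurePreserving (fun q : (∀ j, α j) × α i => Function.update q.1 i q.2)
      ((Measure.pi μ).prod (μ i)) (Measure.pi μ) := by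
  refine ⟨by fun_prop, (Measure.pi_eq fun s hs => ?_).symm⟩
  have hpre : (fun q : (∀ j, α j) × α i => Function.update q.1 i q.2) ⁻¹' Set.univ.pi s
      = Set.univ.pi (Function.update s i Set.univ) ×ˢ s i := by
    ext ⟨p, x⟩
    simp only [Set.mem_preimage, Set.mem_univ_pi, Set.mem_prod]
    refine ⟨fun h => ⟨fun j => ?_, by simpa using h i⟩, fun ⟨h, hx⟩ j => ?_⟩
    · rcases eq_or_ne j i with rfl | hj
      · simp
      · simpa [hj] using h j
    · rcases eq_or_ne j i with rfl | hj
      · simpa using hx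
      · simpa [hj] using h j
  rw [Measure.map_apply (by fun_prop) (.univ_pi hs), hpre, Measure.prod_prod, Measure.pi_pi,
    Fintype.prod_eq_mul_prod_compl i, Fintype.prod_eq_mul_prod_compl i (fun j => μ j (s j)),
    Function.update_self, measure_univ, one_mul, mul_comm]
  congr 1
  refine prod_congr rfl fun j hj => ?_
  rw [Function.update_of_ne (by simpa using hj)]

theorem integral_eq_integral_integral_update [DecidableEq ι] [∀ j, SigmaFinite (μ j)]
    {E : Type*} [NormedAddCommGroup E] [NormedSpace ℝ E] (i : ι) [IsProbabilityMeasure (μ i)]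
    {F : (∀ j, α j) → E} (hF : Integrable F (Measure.pi μ)) :
    ∫ p, F p ∂Measure.pi μ = ∫ p, ∫ x, F (Function.update p i x) ∂μ i ∂Measure.pi μ := by
  have h := measurePreserving_update μ i
  calc ∫ p, F p ∂Measure.pi μ
      = ∫ p, F p ∂((Measure.pi μ).prod (μ i)).map fun q => Function.update q.1 i q.2 := by
        rw [h.map_eq]
    _ = ∫ q, F (Function.update q.1 i q.2) ∂(Measure.pi μ).prod (μ i) :=
        integral_map h.measurable.aemeasurable
          (by rw [h.map_eq]; exact hF.aestronglyMeasurable)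
    _ = _ := integral_prod _ ((h.integrable_comp hF.aestronglyMeasurable).2 hF)

theorem measureReal_pi_sum_sub_integral_ge_le [∀ j, IsProbabilityMeasure (μ j)]
    {X : ∀ j, α j → ℝ} (hX : ∀ j, Measurable (X j)) {a b : ℝ}
    (hXab : ∀ j x, X j x ∈ Set.Icc a b) {ε : ℝ} (hε : 0 ≤ ε) :
    (Measure.pi μ).real {p | ε ≤ ∑ j, (X j (p j) - ∫ x, X j x ∂μ j)}
      ≤ Real.exp (-2 * ε ^ 2 / (Fintype.card ι * (b - a) ^ 2)) := by
  have hsub : ∀ j, HasSubgaussianMGF (fun p : ∀ j, α j => X j (p j) - ∫ x, X j x ∂μ j)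
      ((‖b - a‖₊ / 2) ^ 2) (Measure.pi μ) := fun j => by
    have h := hasSubgaussianMGF_of_mem_Icc (μ := Measure.pi μ) (X := fun p => X j (p j))
      ((hX j).comp (measurable_pi_apply j)).aemeasurable (ae_of_all _ fun p => hXab j (p j))
    rwa [integral_comp_eval (hX j).aestronglyMeasurable] at h
  have hindep :
      iIndepFun (fun j (p : ∀ j, α j) => X j (p j) - ∫ x, X j x ∂μ j) (Measure.pi μ) :=
    iIndepFun_pi (X := fun j x => X j x - ∫ x, X j x ∂μ j) fun j => by fun_prop
  refine (HasSubgaussianMGF.measure_sum_ge_le_of_iIndepFun hindep (s := univ)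
    (fun j _ => hsub j) hε).trans_eq ?_
  congr 1
  simp only [sum_const, card_univ, nsmul_eq_mul, NNReal.coe_mul, NNReal.coe_natCast,
    NNReal.coe_pow, NNReal.coe_div, coe_nnnorm, Real.norm_eq_abs, div_pow, sq_abs,
    NNReal.coe_ofNat]
  rw [show (2:ℝ) * (Fintype.card ι * ((b - a) ^ 2 / 2 ^ 2)) = Fintype.card ι * (b - a) ^ 2 / 2
    by ring, div_div_eq_mul_div]
  ring

end ProductMeasure

section Bernoulli

variable {ι : Type*} [Fintype ι]

noncomputable def bernoulliWeight (c : ι → ℝ) (z : ι → Bool) : ℝ :=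
  ∏ t, if z t then c t else 1 - c t

lemma measureReal_pi_bernoulliMeasure_singleton (c : ι → unitInterval) (z : ι → Bool) :
    (Measure.pi fun t => Ber(true, false, c t)).real {z} = bernoulliWeight (fun t => c t) z := by
  rw [measureReal_def, Measure.pi_singleton, ENNReal.toReal_prod]
  refine prod_congr rfl fun t _ => ?_
  rw [← measureReal_def, bernoulliMeasure_real_apply _ (measurableSet_singleton _)]
  cases z t <;> simp

variable [DecidableEq ι]

lemma sum_bernoulliWeight_mul_ite (c : ι → unitInterval) (P : (ι → Bool) → Prop)
    [DecidablePred P] :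
    ∑ z, bernoulliWeight (fun t => c t) z * (if P z then 1 else 0)
      = (Measure.pi fun t => Ber(true, false, c t)).real {z | P z} := by
  simp_rw [mul_ite, mul_one, mul_zero, ← sum_filter,
    ← measureReal_pi_bernoulliMeasure_singleton]
  rw [sum_measureReal_singleton, coe_filter]
  simp

theorem sum_bernoulliWeight_mul_indicator_le (c : ι → ℝ) (hc : ∀ t, c t ∈ Set.Icc 0 1)
    {β : ℝ} (hβ : 0 ≤ β) :
    ∑ z, bernoulliWeight c z *
        (if β ≤ |∑ t, (if z t then (1:ℝ) else 0) - ∑ t, c t| then 1 else 0)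
      ≤ 2 * Real.exp (-2 * β ^ 2 / Fintype.card ι) := by
  set μ : ι → Measure Bool := fun t => Ber(true, false, ⟨c t, hc t⟩)
  have hupper := measureReal_pi_sum_sub_integral_ge_le μ
    (X := fun _ b => if b then (1:ℝ) else 0) (fun _ => .of_discrete) (a := 0) (b := 1)
    (fun _ b => by cases b <;> simp) hβ
  -- the lower tail is the upper tail of the flipped bits
  have hlower := measureReal_pi_sum_sub_integral_ge_le μ
    (X := fun _ b => if b then (0:ℝ) else 1) (fun _ => .of_discrete) (a := 0) (b := 1)
    (fun _ b => by cases b <;> simp) hβ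
  simp only [μ, integral_bernoulliMeasure, if_true, Bool.false_eq_true, if_false, smul_eq_mul,
    sub_zero, one_pow, mul_one, mul_zero, add_zero, zero_add] at hupper hlower
  rw [sum_bernoulliWeight_mul_ite (fun t => ⟨c t, hc t⟩), two_mul]
  refine (measureReal_mono fun z hz => ?_).trans
    ((measureReal_union_le _ _).trans (add_le_add hupper hlower))
  have hflip : ∀ t, (if z t then (0:ℝ) else 1) = 1 - if z t then 1 else 0 := fun t => by
    cases z t <;> simp
  simp only [Set.mem_ofPred_eq, Set.mem_union, hflip, sum_sub_distrib] at hz ⊢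
  rcases le_abs.1 hz with h | h
  · left; linarith
  · right; linarith

end Bernoulli

noncomputable def xorWeight (b : Bool) (u v : ℝ) : ℝ :=
  if b then u * (1 - v) + (1 - u) * v else u * v + (1 - u) * (1 - v)

lemma xorWeight_comm (b : Bool) (u v : ℝ) : xorWeight b u v = xorWeight b v u := by
  unfold xorWeight; split_ifs <;> ring

@[fun_prop]
lemma Continuous.xorWeight {α : Type*} [TopologicalSpace α] {f g : α → ℝ} (hf : Continuous f)
    (hg : Continuous g) (b : Bool) : Continuous fun a => xorWeight b (f a) (g a) := by
  cases b <;> simp only [_root_.xorWeight, Bool.false_eq_true, if_true, if_false] <;> fun_prop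

lemma abs_ite_sub_ite_eq_ite_xor (a b : Bool) :
    |(if a then (1:ℝ) else 0) - (if b then (1:ℝ) else 0)| = if xor a b then 1 else 0 := by
  cases a <;> cases b <;> simp

section Parity

variable {ι : Type*} [Fintype ι] [DecidableEq ι]

lemma sum_bernoulliWeight_mul_bernoulliWeight_xor (u v : ι → ℝ) (z : ι → Bool) :
    ∑ x, bernoulliWeight u x * bernoulliWeight v (fun t => xor (x t) (z t))
      = ∏ t, xorWeight (z t) (u t) (v t) := by
  simp only [bernoulliWeight, ← prod_mul_distrib]
  rw [← Fintype.prod_sum fun t a =>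
    (if a then u t else 1 - u t) * (if xor a (z t) then v t else 1 - v t)]
  refine prod_congr rfl fun t _ => ?_
  cases z t <;> simp [xorWeight]

lemma sum_sum_bernoulliWeight_mul_bernoulliWeight (u v : ι → ℝ) (g : (ι → Bool) → ℝ) :
    ∑ x, ∑ y, bernoulliWeight u x * bernoulliWeight v y * g (fun t => xor (x t) (y t))
      = ∑ z, (∏ t, xorWeight (z t) (u t) (v t)) * g z := by
  have hxor : ∀ x : ι → Bool, Function.Involutive fun y t => xor (x t) (y t) :=
    fun x y => funext fun t => Bool.bne_self_left (x t) (y t)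
  calc ∑ x, ∑ y, bernoulliWeight u x * bernoulliWeight v y * g (fun t => xor (x t) (y t))
      = ∑ x, ∑ z, bernoulliWeight u x * bernoulliWeight v (fun t => xor (x t) (z t)) * g z :=
        sum_congr rfl fun x _ => Fintype.sum_equiv ((hxor x).toPerm _) _ _ fun y => by simp
    _ = ∑ z, (∏ t, xorWeight (z t) (u t) (v t)) * g z := by
        rw [sum_comm]
        simp_rw [← sum_mul, sum_bernoulliWeight_mul_bernoulliWeight_xor]

end Parity

section UniformCube

lemma integral_Icc_zero_one_quadratic (a b c : ℝ) :
    ∫ x in Set.Icc (0:ℝ) 1, (a + b * x + c * x ^ 2) = a + b / 2 + c / 3 := by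
  rw [integral_Icc_eq_integral_Ioc, ← intervalIntegral.integral_of_le zero_le_one,
    intervalIntegral.integral_add
      ((by fun_prop : Continuous fun x : ℝ => a + b * x).intervalIntegrable _ _)
      ((by fun_prop : Continuous fun x : ℝ => c * x ^ 2).intervalIntegrable _ _),
    intervalIntegral.integral_add intervalIntegrable_const
      ((by fun_prop : Continuous fun x : ℝ => b * x).intervalIntegrable _ _),
    intervalIntegral.integral_const_mul, intervalIntegral.integral_const_mul, integral_id,
    integral_pow]
  norm_num
  ring

lemma integral_Icc_xorWeight_right (b : Bool) (u : ℝ) :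
    ∫ x in Set.Icc (0:ℝ) 1, xorWeight b u x = 1 / 2 := by
  have h : ∀ x, xorWeight b u x
      = (if b then u else 1 - u) + (if b then 1 - 2 * u else 2 * u - 1) * x + 0 * x ^ 2 := by
    intro x; cases b <;> simp only [xorWeight, Bool.false_eq_true, if_true, if_false] <;> ring
  simp only [h, integral_Icc_zero_one_quadratic]
  split_ifs <;> ring

lemma integral_Icc_xorWeight_self (b : Bool) :
    ∫ x in Set.Icc (0:ℝ) 1, xorWeight b x x = if b then 1 / 3 else 1 - 1 / 3 := by
  have h : ∀ x, xorWeight b x x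
      = (if b then 0 else 1) + (if b then 2 else -2) * x + (if b then -2 else 2) * x ^ 2 := by
    intro x; cases b <;> simp only [xorWeight, Bool.false_eq_true, if_true, if_false] <;> ring
  simp only [h, integral_Icc_zero_one_quadratic]
  split_ifs <;> norm_num

instance : IsProbabilityMeasure (volume.restrict (Set.Icc (0:ℝ) 1)) := ⟨by simp⟩

instance (n : ℕ) : IsProbabilityMeasure (uniformCube n) := by
  unfold uniformCube; infer_instance

lemma Continuous.integrable_uniformCube {n : ℕ} {F : (Fin n → ℝ) → ℝ} (hF : Continuous F) :
    Integrable F (uniformCube n) := by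
  rw [uniformCube, ← Measure.restrict_pi_pi]
  exact hF.continuousOn.integrableOn_compact (isCompact_univ_pi fun _ => isCompact_Icc)

lemma integral_uniformCube_eq_integral_update {n : ℕ} (i : Fin n) {F : (Fin n → ℝ) → ℝ}
    (hF : Continuous F) :
    ∫ p, F p ∂uniformCube n
      = ∫ p, (∫ x in Set.Icc (0:ℝ) 1, F (Function.update p i x)) ∂uniformCube n :=
  integral_eq_integral_integral_update _ i hF.integrable_uniformCube

variable {n : ℕ} {f : (Fin n → ℝ) → ℝ}

lemma integral_mul_xorWeight_of_ne {i j : Fin n} (hij : i ≠ j) (hf : Continuous f)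
    (hfj : ∀ p x, f (Function.update p j x) = f p) (b : Bool) :
    ∫ p, f p * xorWeight b (p i) (p j) ∂uniformCube n
      = (∫ p, f p ∂uniformCube n) * (1 / 2) := by
  rw [integral_uniformCube_eq_integral_update j (by fun_prop), ← integral_mul_const]
  congr 1; ext p
  simp only [hfj, Function.update_self, Function.update_of_ne hij]
  rw [integral_const_mul, integral_Icc_xorWeight_right]

lemma integral_mul_xorWeight_self (i : Fin n) (hf : Continuous f)
    (hfi : ∀ p x, f (Function.update p i x) = f p) (b : Bool) :
    ∫ p, f p * xorWeight b (p i) (p i) ∂uniformCube n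
      = (∫ p, f p ∂uniformCube n) * (if b then 1 / 3 else 1 - 1 / 3) := by
  rw [integral_uniformCube_eq_integral_update i (by fun_prop), ← integral_mul_const]
  congr 1; ext p
  simp only [hfi, Function.update_self]
  rw [integral_const_mul, integral_Icc_xorWeight_self]

end UniformCube

noncomputable def mismatchProb {w n : ℕ} (σ τ : Fin w → Fin n) (t : Fin w) : ℝ :=
  if σ t = τ t then 1 / 3 else 1 / 2

lemma mismatchProb_mem_Icc {w n : ℕ} (σ τ : Fin w → Fin n) (t : Fin w) :
    mismatchProb σ τ t ∈ Set.Icc 0 1 := by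
  unfold mismatchProb; split_ifs <;> norm_num

lemma sum_mismatchProb {w n : ℕ} (σ τ : Fin w → Fin n) :
    ∑ t, mismatchProb σ τ t = ((Finset.univ.filter (fun t => σ t = τ t)).card : ℝ) / 3
      + ((w - (Finset.univ.filter (fun t => σ t = τ t)).card : ℕ) : ℝ) / 2 := by
  have hsplit := card_filter_add_card_filter_not (s := (univ : Finset (Fin w)))
    (fun t => σ t = τ t)
  rw [card_univ, Fintype.card_fin] at hsplit
  simp only [mismatchProb]
  rw [sum_ite, sum_const, sum_const, nsmul_eq_mul, nsmul_eq_mul,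
    ← Nat.sub_eq_of_eq_add' hsplit.symm]
  ring

theorem integral_prod_xorWeight {n w : ℕ} (σ τ : Fin w → Fin n) (hσ : StrictMono σ)
    (hτ : StrictMono τ) (z : Fin w → Bool) :
    ∫ p, ∏ t, xorWeight (z t) (p (σ t)) (p (τ t)) ∂uniformCube n
      = bernoulliWeight (mismatchProb σ τ) z := by
  induction w with
  | zero => simp [bernoulliWeight]
  | succ w ih =>
    simp only [bernoulliWeight, Fin.prod_univ_castSucc]
    set L := Fin.last w
    set f : (Fin n → ℝ) → ℝ :=
      fun p => ∏ t : Fin w, xorWeight (z t.castSucc) (p (σ t.castSucc)) (p (τ t.castSucc))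
    have hf : Continuous f := by fun_prop
    have hIH : ∫ p, f p ∂uniformCube n = ∏ t : Fin w,
        if z t.castSucc then mismatchProb σ τ t.castSucc else 1 - mismatchProb σ τ t.castSucc :=
      ih (σ ∘ Fin.castSucc) (τ ∘ Fin.castSucc) (hσ.comp Fin.strictMono_castSucc)
        (hτ.comp Fin.strictMono_castSucc) (z ∘ Fin.castSucc)
    have hfree : ∀ j, (∀ t : Fin w, σ t.castSucc < j ∧ τ t.castSucc < j) →
        ∀ p x, f (Function.update p j x) = f p := fun j hj p x =>
      prod_congr rfl fun t _ => by
        rw [Function.update_of_ne (hj t).1.ne, Function.update_of_ne (hj t).2.ne]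
    have hσL : ∀ t : Fin w, σ t.castSucc < σ L := fun t => hσ (Fin.castSucc_lt_last t)
    have hτL : ∀ t : Fin w, τ t.castSucc < τ L := fun t => hτ (Fin.castSucc_lt_last t)
    rcases lt_trichotomy (σ L) (τ L) with h | h | h
    · rw [integral_mul_xorWeight_of_ne h.ne hf (hfree _ fun t => ⟨(hσL t).trans h, hτL t⟩),
        hIH, mismatchProb, if_neg h.ne]
      cases z L <;> norm_num
    · simp only [← h]
      rw [integral_mul_xorWeight_self _ hf (hfree _ fun t => ⟨hσL t, h ▸ hτL t⟩), hIH,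
        mismatchProb, if_pos h]
    · conv_lhs => enter [2, p, 2]; rw [xorWeight_comm]
      rw [integral_mul_xorWeight_of_ne h.ne hf (hfree _ fun t => ⟨hσL t, (hτL t).trans h⟩),
        hIH, mismatchProb, if_neg h.ne']
      cases z L <;> norm_num

theorem chunk_distance_concentration_general (n w : ℕ)
    (σ τ : Fin w → Fin n) (hσ : StrictMono σ) (hτ : StrictMono τ)
    (q r : ℕ) (hq : q = (Finset.univ.filter (fun t => σ t = τ t)).card) (hr : r = w - q)
    (β : ℝ) (hβ : 0 < β) :
    (∫ p, (∑ x : Fin w → Bool, ∑ y : Fin w → Bool,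
        (∏ t, if x t then p (σ t) else 1 - p (σ t)) *
        (∏ t, if y t then p (τ t) else 1 - p (τ t)) *
        (if β ≤ |(∑ t, |(if x t then (1:ℝ) else 0) - (if y t then (1:ℝ) else 0)|) -
                  ((q:ℝ)/3 + (r:ℝ)/2)| then (1:ℝ) else 0)) ∂(uniformCube n))
      ≤ 2 * Real.exp (-2 * β^2 / w) := by
  have hmean : (q:ℝ) / 3 + (r:ℝ) / 2 = ∑ t, mismatchProb σ τ t := by
    rw [sum_mismatchProb, hr, hq]
  set g : (Fin w → Bool) → ℝ := fun z =>
    if β ≤ |∑ t, (if z t then (1:ℝ) else 0) - ∑ t, mismatchProb σ τ t| then 1 else 0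
  simp only [hmean, abs_ite_sub_ite_eq_ite_xor]
  change ∫ p, ∑ x, ∑ y, bernoulliWeight (fun t => p (σ t)) x *
    bernoulliWeight (fun t => p (τ t)) y * g (fun t => xor (x t) (y t)) ∂uniformCube n ≤ _
  simp only [sum_sum_bernoulliWeight_mul_bernoulliWeight]
  rw [integral_finsetSum _ fun z _ => (by fun_prop : Continuous _).integrable_uniformCube]
  simp only [integral_mul_const, integral_prod_xorWeight σ τ hσ hτ]
  have hoeffding := sum_bernoulliWeight_mul_indicator_le _ (mismatchProb_mem_Icc σ τ) hβ.le
  rwa [Fintype.card_fin] at hoeffding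

/-- Hoeffding-type concentration for the Hamming distance of two chunks: let
`σ, τ : {1,…,w} → {1,…,n}` be strictly increasing position maps, let `p₁,…,pₙ` be
i.i.d. uniform on `[0,1]`, and conditionally on `p` let `X_t ~ Bern(p_{σ(t)})` and
`Y_t ~ Bern(p_{τ(t)})` be mutually independent bits. With `q` the number of aligned
indices (`σ(t) = τ(t)`) and `r = w - q`, for every `β > 0` the probability that
`|∑_t |X_t - Y_t| - (q/3 + r/2)| ≥ β` is at most `2 exp(-2β²/w)`. The probability is
written as the integral over `p` of the conditional probability of the event. -/
theorem chunk_distance_concentration (n w : ℕ) (hn : 0 < n) (hw : 0 < w)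
    (σ τ : Fin w → Fin n) (hσ : StrictMono σ) (hτ : StrictMono τ)
    (q r : ℕ) (hq : q = (Finset.univ.filter (fun t => σ t = τ t)).card) (hr : r = w - q)
    (β : ℝ) (hβ : 0 < β) :
    (∫ p, (∑ x : Fin w → Bool, ∑ y : Fin w → Bool,
        (∏ t, if x t then p (σ t) else 1 - p (σ t)) *
        (∏ t, if y t then p (τ t) else 1 - p (τ t)) *
        (if β ≤ |(∑ t, |(if x t then (1:ℝ) else 0) - (if y t then (1:ℝ) else 0)|) -
                  ((q:ℝ)/3 + (r:ℝ)/2)| then (1:ℝ) else 0)) ∂(uniformCube n))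
      ≤ 2 * Real.exp (-2 * β^2 / w) :=
  chunk_distance_concentration_general n w σ τ hσ hτ q r hq hr β hβ
end
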